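/- arXiv:2207.11273 — 2 statements merged into one kernel-verified Lean document; each statement's English description precedes it below -/
import Mathlib

section
/- For every integer k ≥ 1, setting n = 4k, there exists a word w of length n such that every letter occurs at most 1 + n/4 times in w and f(w) > n + 2. (Concretely, the word consisting of k+1 copies of a letter A, followed by 2k−2 pairwise distinct letters, followed by k+1 copies of a letter M, satisfies f(w) ≥ 4(k+1) > n+2.) -/
/-!
Take `w = A^(k+1) c₁ ⋯ c_(2k-2) M^(k+1)`, of length `n = 4k`. Reversal swaps the `A`-block `S` and
the `M`-block `S'`, so one grid can carry `w` forwards in the rows and columns indexed by `S` and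
backwards in those indexed by `S'`: put `w` vertically (forwards, resp. backwards) into the columns
of `S` and `S'`, and fill every other column row by row. Where a row of `S ∪ S'` crosses a column of
`S ∪ S'`, both read the letter of the block they pass through, so all `2(k+1)` rows and `2(k+1)`
columns contain `w`, and `f(w) ≥ 4k + 4 > n + 2`.
-/

namespace WordGrid

variable {α : Type*}

/-- The `i`-th row of the grid `G` contains the word `w` (forwards or backwards). -/
def rowC {n : ℕ} (w : Fin n → α) (G : Fin n → Fin n → α) (i : Fin n) : Prop :=
  (∀ j, G i j = w j) ∨ (∀ j, G i j = w j.rev)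

/-- The `i`-th column of the grid `G` contains the word `w` (forwards or backwards). -/
def colC {n : ℕ} (w : Fin n → α) (G : Fin n → Fin n → α) (i : Fin n) : Prop :=
  (∀ j, G j i = w j) ∨ (∀ j, G j i = w j.rev)

/-- The main diagonal of the grid `G` contains the word `w`. -/
def diagC {n : ℕ} (w : Fin n → α) (G : Fin n → Fin n → α) : Prop :=
  (∀ j, G j j = w j) ∨ (∀ j, G j j = w j.rev)

/-- The anti-diagonal of the grid `G` contains the word `w`. -/
def adiagC {n : ℕ} (w : Fin n → α) (G : Fin n → Fin n → α) : Prop :=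
  (∀ j, G j j.rev = w j) ∨ (∀ j, G j j.rev = w j.rev)

open Classical in
/-- `f(w,G)`: the number of rows, columns and diagonals of `G` containing `w`. -/
noncomputable def count {n : ℕ} (w : Fin n → α) (G : Fin n → Fin n → α) : ℕ :=
  {i | rowC w G i}.ncard + {i | colC w G i}.ncard
    + (if diagC w G then 1 else 0) + (if adiagC w G then 1 else 0)

/-- `f(w)`: the maximum of `f(w,G)` over all `n`-grids `G`. -/
noncomputable def fword {n : ℕ} (w : Fin n → α) : ℕ :=
  sSup {m | ∃ G : Fin n → Fin n → α, count w G = m}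

section Grid

variable {n : ℕ}

theorem count_le (w : Fin n → α) (G : Fin n → Fin n → α) : count w G ≤ 2 * n + 2 := by
  have hrow := Set.ncard_le_card {i | rowC w G i}
  have hcol := Set.ncard_le_card {i | colC w G i}
  rw [Nat.card_eq_fintype_card, Fintype.card_fin] at hrow hcol
  unfold count
  split_ifs <;> omega

theorem count_le_fword (w : Fin n → α) (G : Fin n → Fin n → α) : count w G ≤ fword w :=
  le_csSup ⟨2 * n + 2, by rintro m ⟨H, rfl⟩; exact count_le w H⟩ ⟨G, rfl⟩

theorem card_add_card_le_count (w : Fin n → α) (G : Fin n → Fin n → α) (r c : Finset (Fin n))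
    (hr : ∀ i ∈ r, rowC w G i) (hc : ∀ i ∈ c, colC w G i) : r.card + c.card ≤ count w G := by
  have hrow : r.card ≤ {i | rowC w G i}.ncard := by
    rw [← Set.ncard_coe_finset]
    exact Set.ncard_le_ncard hr
  have hcol : c.card ≤ {i | colC w G i}.ncard := by
    rw [← Set.ncard_coe_finset]
    exact Set.ncard_le_ncard hc
  unfold count
  omega

def blockGrid (w : Fin n → α) (s : Finset (Fin n)) (i j : Fin n) : α :=
  if j ∈ s then w i else if j.rev ∈ s then w i.rev else if i ∈ s then w j else w j.rev

variable (w : Fin n → α) (s : Finset (Fin n))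

theorem colC_blockGrid_of_mem {j : Fin n} (hj : j ∈ s) : colC w (blockGrid w s) j :=
  Or.inl fun _ => if_pos hj

theorem colC_blockGrid_of_rev_mem (hs : ∀ i ∈ s, i.rev ∉ s) {j : Fin n} (hj : j.rev ∈ s) :
    colC w (blockGrid w s) j := by
  have hj' : j ∉ s := fun h => hs j h hj
  exact Or.inr fun _ => by rw [blockGrid, if_neg hj', if_pos hj]

variable (a m : α) (ha : ∀ i ∈ s, w i = a) (hm : ∀ i ∈ s, w i.rev = m)
include ha hm

theorem rowC_blockGrid_of_mem {i : Fin n} (hi : i ∈ s) : rowC w (blockGrid w s) i := by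
  refine Or.inl fun j => ?_
  unfold blockGrid
  split_ifs with hj hj'
  · rw [ha i hi, ha j hj]
  · rw [hm i hi, ← hm _ hj', Fin.rev_rev]
  · rfl

theorem rowC_blockGrid_of_rev_mem (hs : ∀ i ∈ s, i.rev ∉ s) {i : Fin n} (hi : i.rev ∈ s) :
    rowC w (blockGrid w s) i := by
  have hi' : i ∉ s := fun h => hs i h hi
  refine Or.inr fun j => ?_
  unfold blockGrid
  split_ifs with hj hj'
  · rw [← Fin.rev_rev i, hm _ hi, hm j hj]
  · rw [ha _ hi, ha _ hj']
  · rfl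

theorem four_mul_card_le_fword (hs : ∀ i ∈ s, i.rev ∉ s) : 4 * s.card ≤ fword w := by
  set t := s ∪ s.map Fin.revPerm.toEmbedding
  have hrev_mem {i : Fin n} : i ∈ s.map Fin.revPerm.toEmbedding ↔ i.rev ∈ s := by
    simp [Finset.mem_map_equiv]
  have ht : t.card = 2 * s.card := by
    rw [Finset.card_union_of_disjoint, Finset.card_map]
    · ring
    · exact Finset.disjoint_left.2 fun i hi hi' => hs i hi (hrev_mem.1 hi')
  have hrow : ∀ i ∈ t, rowC w (blockGrid w s) i := by
    intro i hi
    rcases Finset.mem_union.1 hi with hi | hi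
    · exact rowC_blockGrid_of_mem w s a m ha hm hi
    · exact rowC_blockGrid_of_rev_mem w s a m ha hm hs (hrev_mem.1 hi)
  have hcol : ∀ i ∈ t, colC w (blockGrid w s) i := by
    intro i hi
    rcases Finset.mem_union.1 hi with hi | hi
    · exact colC_blockGrid_of_mem w s hi
    · exact colC_blockGrid_of_rev_mem w s hs (hrev_mem.1 hi)
  calc 4 * s.card = t.card + t.card := by omega
    _ ≤ count w (blockGrid w s) := card_add_card_le_count w _ t t hrow hcol
    _ ≤ fword w := count_le_fword w _

end Grid

theorem ncard_le_card_of_val_mem {n : ℕ} (s : Set (Fin n)) (T : Finset ℕ)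
    (h : ∀ i ∈ s, i.val ∈ T) : s.ncard ≤ T.card := by
  rw [← Set.ncard_image_of_injective s Fin.val_injective, ← Set.ncard_coe_finset]
  exact Set.ncard_le_ncard (Set.image_subset_iff.2 h)

/-- The word `A^(k+1) c₁ ⋯ c_(2k-2) M^(k+1)` with `A = 0`, `M = 1` and `cᵢ = i + 2`. -/
def blockWord (k : ℕ) (i : Fin (4 * k)) : ℕ :=
  if i.val ≤ k then 0 else if 3 * k - 1 ≤ i.val then 1 else i.val + 2

section BlockWord

variable {k : ℕ}

theorem ncard_blockWord_fiber_le (a : ℕ) : {i | blockWord k i = a}.ncard ≤ 1 + k := by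
  rcases a with _ | _ | b
  · calc _ ≤ (Finset.range (k + 1)).card := ncard_le_card_of_val_mem _ _ fun i hi => by
          simp only [Set.mem_ofPred_eq, blockWord] at hi
          simp only [Finset.mem_range]
          split_ifs at hi
          omega
      _ = 1 + k := by simp [add_comm]
  · calc _ ≤ (Finset.Ico (3 * k - 1) (4 * k)).card := ncard_le_card_of_val_mem _ _ fun i hi => by
          simp only [Set.mem_ofPred_eq, blockWord] at hi
          simp only [Finset.mem_Ico]
          split_ifs at hi <;> omega
      _ ≤ 1 + k := by simp only [Nat.card_Ico]; omega
  · calc _ ≤ ({b} : Finset ℕ).card := ncard_le_card_of_val_mem _ _ fun i hi => by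
          simp only [Set.mem_ofPred_eq, blockWord] at hi
          simp only [Finset.mem_singleton]
          split_ifs at hi <;> omega
      _ ≤ 1 + k := by simp

theorem blockWord_of_le {i : Fin (4 * k)} (hi : i.val ≤ k) : blockWord k i = 0 :=
  if_pos hi

theorem blockWord_rev_of_le {i : Fin (4 * k)} (hi : i.val ≤ k) : blockWord k i.rev = 1 := by
  have hrev : i.rev.val = 4 * k - (i.val + 1) := Fin.val_rev i
  rw [blockWord, if_neg (by omega), if_pos (by omega)]

theorem four_mul_add_four_le_fword_blockWord (hk : 1 ≤ k) : 4 * k + 4 ≤ fword (blockWord k) := by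
  set s := Finset.Iic (⟨k, by omega⟩ : Fin (4 * k))
  have hs {i : Fin (4 * k)} : i ∈ s ↔ i.val ≤ k := by simp [s, Fin.le_def]
  have hdisj : ∀ i ∈ s, i.rev ∉ s := by
    intro i hi hi'
    have := Fin.val_rev i
    rw [hs] at hi hi'
    omega
  have hlines := four_mul_card_le_fword (blockWord k) s 0 1
    (fun i hi => blockWord_of_le (hs.1 hi)) (fun i hi => blockWord_rev_of_le (hs.1 hi)) hdisj
  rwa [Fin.card_Iic, mul_add] at hlines

end BlockWord

theorem few_letters_sharp (k : ℕ) (hk : 1 ≤ k) :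
    ∃ (α : Type) (w : Fin (4 * k) → α),
      (∀ a : α, {i | w i = a}.ncard ≤ 1 + k) ∧ fword w > 4 * k + 2 :=
  ⟨ℕ, blockWord k, ncard_blockWord_fiber_le, by
    have := four_mul_add_four_le_fword_blockWord hk
    omega⟩

end WordGrid
end

section
/- Let w be a word of length n ≥ 2 such that w_i ≠ w_{n-i+1} for some index i. Then f(w) ≤ 2n. -/
/-!
Fix `i` with `w i ≠ w (rev i)`. Comparing a few cells shows that if the main diagonal contains
`w`, then column `i` and row `rev i` do not both contain it, and if the anti-diagonal does,
column `i` and row `i` do not. Applied to `i` and to `rev i`, this bounds the number of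
diagonals containing `w` by the number of the four distinct lines row `i`, row `rev i`,
column `i`, column `rev i` that do not contain it, so the count is at most the `2n` lines.
-/

namespace WordGrid

variable {α : Type*}

lemma _root_.Set.ncard_add_ite_notMem_le_card {β : Type*} [Finite β] (s : Set β) {x y : β} (hxy : x ≠ y)
    [Decidable (x ∈ s)] [Decidable (y ∈ s)] :
    s.ncard + (if x ∈ s then 0 else 1) + (if y ∈ s then 0 else 1) ≤ Nat.card β := by
  classical
  have h := Set.ncard_le_card (insert x (insert y s))
  rw [Set.ncard_insert_eq_ite, Set.ncard_insert_eq_ite] at h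
  simp only [Set.mem_insert_iff, hxy, false_or] at h
  split_ifs at h ⊢ <;> simp_all

variable {n : ℕ} {w : Fin n → α} {G : Fin n → Fin n → α} {i : Fin n}

lemma not_colC_and_rowC_rev_of_diagC (hi : w i ≠ w i.rev) (hd : diagC w G) :
    ¬(colC w G i ∧ rowC w G i.rev) := by
  rintro ⟨hc | hc, hr | hr⟩ <;> rcases hd with hd | hd <;> grind [Fin.rev_rev]

lemma not_colC_and_rowC_of_adiagC (hi : w i ≠ w i.rev) (ha : adiagC w G) :
    ¬(colC w G i ∧ rowC w G i) := by
  rintro ⟨hc | hc, hr | hr⟩ <;> rcases ha with ha | ha <;> grind [Fin.rev_rev]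

open Classical in
lemma ite_diagC_add_ite_adiagC_le (hi : w i ≠ w i.rev) :
    (if diagC w G then 1 else 0) + (if adiagC w G then 1 else 0) ≤
      (if rowC w G i then 0 else 1) + (if rowC w G i.rev then 0 else 1) +
        (if colC w G i then 0 else 1) + (if colC w G i.rev then 0 else 1) := by
  have hi' : w i.rev ≠ w i.rev.rev := by rw [Fin.rev_rev]; exact hi.symm
  have hd := not_colC_and_rowC_rev_of_diagC (G := G) hi
  have hd' := not_colC_and_rowC_rev_of_diagC (G := G) hi'
  have ha := not_colC_and_rowC_of_adiagC (G := G) hi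
  have ha' := not_colC_and_rowC_of_adiagC (G := G) hi'
  rw [Fin.rev_rev] at hd'
  split_ifs <;> simp_all

lemma count_le_two_mul (hw : ∃ i, w i ≠ w i.rev) : count w G ≤ 2 * n := by
  classical
  obtain ⟨i, hi⟩ := hw
  have hne : i ≠ i.rev := fun h => hi (congrArg w h)
  have hR := Set.ncard_add_ite_notMem_le_card {k | rowC w G k} hne
  have hC := Set.ncard_add_ite_notMem_le_card {k | colC w G k} hne
  have hdiag := ite_diagC_add_ite_adiagC_le (G := G) hi
  simp only [Set.mem_ofPred_eq, Nat.card_eq_fintype_card, Fintype.card_fin] at hR hC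
  unfold count
  omega

theorem fword_le_two_n_general {n : ℕ} (w : Fin n → α)
    (h : ∃ i, w i ≠ w i.rev) :
    fword w ≤ 2 * n :=
  csSup_le' <| by
    rintro m ⟨G, rfl⟩
    exact count_le_two_mul h

theorem fword_le_two_n {n : ℕ} (hn : 2 ≤ n) (w : Fin n → α)
    (h : ∃ i, w i ≠ w i.rev) :
    fword w ≤ 2 * n :=
  fword_le_two_n_general w h

end WordGrid
end
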